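/- Consider the abstract exponential Runge–Kutta scheme with a μ-Lipschitz map 𝒫, and assume in addition that 𝒫(M) = μM. Then: (i) if f⁰ = M, every stage equals M and f¹ = M (M is an equilibrium of the scheme); (ii) for any f⁰ ∈ E, ‖f¹ − M‖ ≤ R(λ) ‖f⁰ − M‖. Consequently, if R(λ) → 0 as λ → ∞, then for fixed f⁰ the update f¹ = f¹(λ) converges to M as λ → ∞ (asymptotic preservation). -/

import Mathlib

/-!
Subtracting `M` from a stage and using `𝒫(M) = μM`, the map `f ↦ 𝒫(f)/μ` does not increase the
distance to `M`, so the stage errors `e_i = ‖F⁽ⁱ⁾ - M‖` satisfy the componentwise inequality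
`e ≤ ‖f⁰ - M‖ Ē ē + λ Ā e`. The matrix `λĀ` is nonnegative and strictly lower triangular, hence
`(λĀ)^ν = 0`, and iterating the inequality gives `e ≤ ‖f⁰ - M‖ ∑_{k<ν} (λĀ)^k Ē ē`. Inserted into
the update this is exactly `‖f¹ - M‖ ≤ R(λ) ‖f⁰ - M‖`; the case `f⁰ = M` gives the equilibrium
property and `R(λ) → 0` gives asymptotic preservation.
-/

open Matrix Filter

namespace Matrix

section OrderedSemiring

variable {ι R : Type*} [Fintype ι] [Semiring R] [PartialOrder R] [IsOrderedRing R]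

lemma mulVec_mono_of_nonneg {T : Matrix ι ι R} (hT : ∀ i j, 0 ≤ T i j) {x y : ι → R}
    (hxy : x ≤ y) : T *ᵥ x ≤ T *ᵥ y :=
  fun i => Finset.sum_le_sum fun j _ => mul_le_mul_of_nonneg_left (hxy j) (hT i j)

lemma le_geom_sum_mulVec_of_le_add_mulVec [DecidableEq ι] {T : Matrix ι ι R}
    (hT : ∀ i j, 0 ≤ T i j) {n : ℕ} (hTn : T ^ n = 0) {x v : ι → R} (hx : x ≤ v + T *ᵥ x) :
    x ≤ (∑ k ∈ Finset.range n, T ^ k) *ᵥ v := by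
  have unrolled : ∀ m, x ≤ (∑ k ∈ Finset.range m, T ^ k) *ᵥ v + T ^ m *ᵥ x := by
    intro m
    induction m with
    | zero => simp
    | succ m ih =>
      calc x ≤ (∑ k ∈ Finset.range m, T ^ k) *ᵥ v + T ^ m *ᵥ x := ih
        _ ≤ (∑ k ∈ Finset.range m, T ^ k) *ᵥ v + T ^ m *ᵥ (v + T *ᵥ x) :=
          add_le_add le_rfl (mulVec_mono_of_nonneg (pow_apply_nonneg hT m) hx)
        _ = (∑ k ∈ Finset.range (m + 1), T ^ k) *ᵥ v + T ^ (m + 1) *ᵥ x := by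
          rw [Finset.sum_range_succ, add_mulVec, mulVec_add, mulVec_mulVec, ← pow_succ, add_assoc]
  simpa [hTn] using unrolled n

end OrderedSemiring

variable {R : Type*} [Semiring R] {n : ℕ}

lemma pow_apply_eq_zero_of_lt_add {B : Matrix (Fin n) (Fin n) R}
    (hB : ∀ i j, i ≤ j → B i j = 0) (k : ℕ) (i j : Fin n) (hij : (i : ℕ) < j + k) :
    (B ^ k) i j = 0 := by
  induction k generalizing j with
  | zero => exact one_apply_ne (by rintro rfl; simp at hij)
  | succ k ih =>
    rw [pow_succ, mul_apply]
    refine Finset.sum_eq_zero fun l _ => ?_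
    by_cases hlj : l ≤ j
    · rw [hB l j hlj, mul_zero]
    · rw [ih l (by omega), zero_mul]

lemma pow_eq_zero_of_strictlyLowerTriangular {B : Matrix (Fin n) (Fin n) R}
    (hB : ∀ i j, i ≤ j → B i j = 0) : B ^ n = 0 := by
  ext i j
  exact pow_apply_eq_zero_of_lt_add hB n i j (by omega)

end Matrix

section ExpRK

variable {E : Type*} [NormedAddCommGroup E] [NormedSpace ℝ E]

lemma norm_inv_smul_sub_le_of_lipschitz {μ : ℝ} (hμ : 0 < μ) {P : E → E}
    (hP : ∀ f g, ‖P f - P g‖ ≤ μ * ‖f - g‖) {M : E} (hPM : P M = μ • M) (x : E) :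
    ‖μ⁻¹ • P x - M‖ ≤ ‖x - M‖ := by
  calc ‖μ⁻¹ • P x - M‖ = ‖μ⁻¹ • (P x - P M)‖ := by rw [smul_sub, hPM, inv_smul_smul₀ hμ.ne']
    _ = μ⁻¹ * ‖P x - P M‖ := by rw [norm_smul, Real.norm_of_nonneg (inv_nonneg.2 hμ.le)]
    _ ≤ μ⁻¹ * (μ * ‖x - M‖) := by gcongr; exact hP x M
    _ = ‖x - M‖ := by rw [inv_mul_cancel_left₀ hμ.ne']

lemma norm_expRK_combination_sub_le {ι : Type*} (s : Finset ι) {a lam : ℝ} (ha : 0 ≤ a)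
    (hlam : 0 ≤ lam) (f M : E) (w : ι → ℝ) (y : ι → E) :
    ‖a • f + lam • ∑ j ∈ s, w j • y j + (1 - a) • M - M‖
      ≤ a * ‖f - M‖ + lam * ∑ j ∈ s, |w j| * ‖y j‖ := by
  have hsplit : a • f + lam • ∑ j ∈ s, w j • y j + (1 - a) • M - M
      = a • (f - M) + lam • ∑ j ∈ s, w j • y j := by module
  rw [hsplit]
  refine (norm_add_le _ _).trans (add_le_add ?_ ?_)
  · rw [norm_smul, Real.norm_of_nonneg ha]
  · rw [norm_smul, Real.norm_of_nonneg hlam]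
    gcongr
    refine (norm_sum_le _ _).trans (le_of_eq ?_)
    simp only [norm_smul, Real.norm_eq_abs]

noncomputable def expRKStageGain {ν : ℕ} (A : Matrix (Fin ν) (Fin ν) ℝ) (c : Fin ν → ℝ) (lam : ℝ) :
    Fin ν → ℝ :=
  (∑ k ∈ Finset.range ν, (lam • A.map abs) ^ k) *ᵥ fun i => Real.exp (-(c i * lam))

lemma norm_expRK_stage_sub_le {ν : ℕ} (c : Fin ν → ℝ) (A : Matrix (Fin ν) (Fin ν) ℝ)
    (hA : ∀ i j, i ≤ j → A i j = 0) {lam : ℝ} (hlam : 0 ≤ lam) (g : E → E) {M : E}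
    (hg : ∀ x, ‖g x - M‖ ≤ ‖x - M‖) (f0 : E) (F : Fin ν → E)
    (hF : ∀ i, F i = Real.exp (-(c i * lam)) • f0
      + lam • ∑ j ∈ Finset.Iio i, A i j • (g (F j) - M)
      + (1 - Real.exp (-(c i * lam))) • M) (i : Fin ν) :
    ‖F i - M‖ ≤ expRKStageGain A c lam i * ‖f0 - M‖ := by
  set T := lam • A.map abs
  have hT : ∀ i j, 0 ≤ T i j := fun i j => mul_nonneg hlam (abs_nonneg _)
  have hTν : T ^ ν = 0 :=
    pow_eq_zero_of_strictlyLowerTriangular fun i j hij => by simp [T, hA i j hij]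
  have hstage : (fun i => ‖F i - M‖)
      ≤ ‖f0 - M‖ • (fun i => Real.exp (-(c i * lam))) + T *ᵥ fun i => ‖F i - M‖ := by
    intro i
    calc ‖F i - M‖
        ≤ Real.exp (-(c i * lam)) * ‖f0 - M‖
            + lam * ∑ j ∈ Finset.Iio i, |A i j| * ‖g (F j) - M‖ := by
          rw [hF i]
          exact norm_expRK_combination_sub_le _ (Real.exp_nonneg _) hlam _ _ _ _
      _ ≤ Real.exp (-(c i * lam)) * ‖f0 - M‖ + lam * ∑ j, |A i j| * ‖F j - M‖ := by
          gcongr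
          refine (Finset.sum_le_sum fun j _ => ?_).trans
            (Finset.sum_le_sum_of_subset_of_nonneg (Finset.subset_univ _) fun j _ _ => ?_)
          · exact mul_le_mul_of_nonneg_left (hg _) (abs_nonneg _)
          · positivity
      _ = _ := by
          simp only [T, Pi.add_apply, Pi.smul_apply, smul_eq_mul, mulVec, dotProduct,
            Matrix.smul_apply, map_apply, Finset.mul_sum, mul_assoc]
          ring
  simpa [expRKStageGain, mulVec_smul, mul_comm] using
    le_geom_sum_mulVec_of_le_add_mulVec hT hTν hstage i

lemma expRK_stability_sum_eq {ν : ℕ} (A : Matrix (Fin ν) (Fin ν) ℝ) (c : Fin ν → ℝ) (lam : ℝ)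
    (u : Fin ν → ℝ) :
    ∑ k ∈ Finset.range ν, lam ^ (k + 1) *
      (u ⬝ᵥ (((A.map abs) ^ k * diagonal fun i => Real.exp (-(c i * lam))) *ᵥ fun _ => 1))
      = lam * (u ⬝ᵥ expRKStageGain A c lam) := by
  have hdiag : (diagonal fun i => Real.exp (-(c i * lam))) *ᵥ (fun _ => 1)
      = fun i => Real.exp (-(c i * lam)) := by
    ext i; simp [mulVec_diagonal]
  simp only [expRKStageGain, ← mulVec_mulVec, hdiag, sum_mulVec, smul_pow, smul_mulVec,
    dotProduct_sum, dotProduct_smul, Finset.mul_sum, smul_eq_mul, pow_succ]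
  exact Finset.sum_congr rfl fun k _ => by ring

end ExpRK

theorem expRK_equilibrium_and_asymptotic_preservation_general
    {E : Type*} [NormedAddCommGroup E] [NormedSpace ℝ E]
    (ν : ℕ)
    (c : Fin ν → ℝ)
    (A : ℝ → Matrix (Fin ν) (Fin ν) ℝ)
    (hA : ∀ (lam : ℝ) (i j : Fin ν), i ≤ j → A lam i j = 0)
    (W : ℝ → Fin ν → ℝ) (μ : ℝ) (hμ : 0 < μ) (M : E)
    (P : E → E) (hP : ∀ f g : E, ‖P f - P g‖ ≤ μ * ‖f - g‖)
    (hPM : P M = μ • M)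
    (f0 : E) (F : ℝ → Fin ν → E) (f1 : ℝ → E)
    (hF : ∀ lam : ℝ, 0 ≤ lam → ∀ i, F lam i = Real.exp (-(c i * lam)) • f0
      + lam • ∑ j ∈ Finset.Iio i, A lam i j • (μ⁻¹ • P (F lam j) - M)
      + (1 - Real.exp (-(c i * lam))) • M)
    (hf1 : ∀ lam : ℝ, 0 ≤ lam → f1 lam = Real.exp (-lam) • f0
      + lam • ∑ i, W lam i • (μ⁻¹ • P (F lam i) - M) + (1 - Real.exp (-lam)) • M)
    (R : ℝ → ℝ)
    (hR : ∀ lam : ℝ, R lam = Real.exp (-lam) + ∑ k ∈ Finset.range ν, lam ^ (k + 1) *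
      ((fun i => |W lam i|) ⬝ᵥ ((((A lam).map fun x => |x|) ^ k *
        Matrix.diagonal fun i => Real.exp (-(c i * lam))) *ᵥ fun _ => 1))) :
    (f0 = M → ∀ lam : ℝ, 0 ≤ lam → (∀ i, F lam i = M) ∧ f1 lam = M) ∧
    (∀ lam : ℝ, 0 ≤ lam → ‖f1 lam - M‖ ≤ R lam * ‖f0 - M‖) ∧
    (Tendsto R atTop (nhds 0) → Tendsto f1 atTop (nhds M)) := by
  have hg := norm_inv_smul_sub_le_of_lipschitz hμ hP hPM
  have hstage (lam : ℝ) (hlam : 0 ≤ lam) (i : Fin ν) :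
      ‖F lam i - M‖ ≤ expRKStageGain (A lam) c lam i * ‖f0 - M‖ :=
    norm_expRK_stage_sub_le c (A lam) (hA lam) hlam _ hg f0 (F lam) (hF lam hlam) i
  have hupdate (lam : ℝ) (hlam : 0 ≤ lam) : ‖f1 lam - M‖ ≤ R lam * ‖f0 - M‖ := calc
    ‖f1 lam - M‖ ≤ Real.exp (-lam) * ‖f0 - M‖
        + lam * ∑ i, |W lam i| * ‖μ⁻¹ • P (F lam i) - M‖ := by
      rw [hf1 lam hlam]
      exact norm_expRK_combination_sub_le _ (Real.exp_nonneg _) hlam _ _ _ _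
    _ ≤ Real.exp (-lam) * ‖f0 - M‖
        + lam * ∑ i, |W lam i| * (expRKStageGain (A lam) c lam i * ‖f0 - M‖) := by
      gcongr with i
      exact (hg _).trans (hstage lam hlam i)
    _ = R lam * ‖f0 - M‖ := by
      rw [hR, expRK_stability_sum_eq]
      simp only [dotProduct, add_mul, mul_assoc, Finset.sum_mul]
  refine ⟨fun hf0 lam hlam => ⟨fun i => ?_, ?_⟩, hupdate, fun hR0 => ?_⟩
  · simpa [hf0, sub_eq_zero] using hstage lam hlam i
  · simpa [hf0, sub_eq_zero] using hupdate lam hlam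
  · rw [tendsto_iff_norm_sub_tendsto_zero]
    refine squeeze_zero' (Eventually.of_forall fun _ => norm_nonneg _) ?_
      (by simpa using hR0.mul_const ‖f0 - M‖)
    filter_upwards [eventually_ge_atTop 0] with lam hlam using hupdate lam hlam

/-- for the abstract exponential Runge–Kutta scheme with `𝒫(M) = μM`:
(i) `M` is an equilibrium of the scheme; (ii) `‖f¹ - M‖ ≤ R(λ)‖f⁰ - M‖`;
(iii) if `R(λ) → 0` as `λ → ∞` then `f¹(λ) → M` (asymptotic preservation). -/
theorem expRK_equilibrium_and_asymptotic_preservation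
    {E : Type*} [NormedAddCommGroup E] [NormedSpace ℝ E]
    (ν : ℕ) (hν : 1 ≤ ν)
    (c : Fin ν → ℝ) (hc : ∀ i, 0 ≤ c i)
    (A : ℝ → Matrix (Fin ν) (Fin ν) ℝ)
    (hA : ∀ (lam : ℝ) (i j : Fin ν), i ≤ j → A lam i j = 0)
    (W : ℝ → Fin ν → ℝ) (μ : ℝ) (hμ : 0 < μ) (M : E)
    (P : E → E) (hP : ∀ f g : E, ‖P f - P g‖ ≤ μ * ‖f - g‖)
    (hPM : P M = μ • M)
    (f0 : E) (F : ℝ → Fin ν → E) (f1 : ℝ → E)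
    (hF : ∀ lam : ℝ, 0 ≤ lam → ∀ i, F lam i = Real.exp (-(c i * lam)) • f0
      + lam • ∑ j ∈ Finset.Iio i, A lam i j • (μ⁻¹ • P (F lam j) - M)
      + (1 - Real.exp (-(c i * lam))) • M)
    (hf1 : ∀ lam : ℝ, 0 ≤ lam → f1 lam = Real.exp (-lam) • f0
      + lam • ∑ i, W lam i • (μ⁻¹ • P (F lam i) - M) + (1 - Real.exp (-lam)) • M)
    (R : ℝ → ℝ)
    (hR : ∀ lam : ℝ, R lam = Real.exp (-lam) + ∑ k ∈ Finset.range ν, lam ^ (k + 1) *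
      ((fun i => |W lam i|) ⬝ᵥ ((((A lam).map fun x => |x|) ^ k *
        Matrix.diagonal fun i => Real.exp (-(c i * lam))) *ᵥ fun _ => 1))) :
    (f0 = M → ∀ lam : ℝ, 0 ≤ lam → (∀ i, F lam i = M) ∧ f1 lam = M) ∧
    (∀ lam : ℝ, 0 ≤ lam → ‖f1 lam - M‖ ≤ R lam * ‖f0 - M‖) ∧
    (Tendsto R atTop (nhds 0) → Tendsto f1 atTop (nhds M)) :=
  expRK_equilibrium_and_asymptotic_preservation_general ν c A hA W μ hμ M P hP hPM f0 F f1 hF hf1 R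
    hR
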